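/- arXiv:1110.4511 — 5 statements merged into one kernel-verified Lean document; each statement's English description precedes it below -/
import Mathlib

section
/- If G₁ and G₂ are groups with uncountable strong cofinality, then the direct product G₁ × G₂ has uncountable strong cofinality. -/
open Pointwise

/-- A group has uncountable strong cofinality if every increasing exhaustion
`G = ⋃ₘ Aₘ` satisfies `Aₘᵏ = G` for some `m, k`. -/
def HasUncountableStrongCofinality (G : Type*) [Group G] : Prop :=
  ∀ A : ℕ → Set G, Monotone A → (⋃ m, A m) = Set.univ →
    ∃ m k, A m ^ k = (Set.univ : Set G)

/-!
Pull the exhaustion `Aₘ` of `G₁ × G₂` back along the two factor inclusions: each factor is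
exhausted by the preimages, so `G₁ × 1 ⊆ A_{m₁}^{k₁}` and `1 × G₂ ⊆ A_{m₂}^{k₂}`. Since
`(a, b) = (a, 1) * (1, b)`, the monotone chain gives `A_{max m₁ m₂}^{k₁ + k₂} = G₁ × G₂`.
-/

open Set

theorem HasUncountableStrongCofinality.exists_range_subset_pow {G H : Type*} [Group G]
    [Monoid H] (hG : HasUncountableStrongCofinality G) (f : G →* H) {A : ℕ → Set H}
    (hA : Monotone A) (hcover : range f ⊆ ⋃ m, A m) : ∃ m k, range f ⊆ A m ^ k := by
  have hpreimage : ⋃ m, f ⁻¹' A m = univ := by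
    rwa [← preimage_iUnion, preimage_eq_univ_iff]
  obtain ⟨m, k, hk⟩ := hG (fun m ↦ f ⁻¹' A m) (fun _ _ h ↦ preimage_mono (hA h)) hpreimage
  refine ⟨m, k, ?_⟩
  calc range f = f '' (f ⁻¹' A m) ^ k := by rw [hk, image_univ]
    _ = (f '' (f ⁻¹' A m)) ^ k := image_pow f _ k
    _ ⊆ A m ^ k := pow_subset_pow_left (image_preimage_subset f _)

/-- uncountable strong cofinality is preserved by finite direct
products. -/
theorem uncountable_strong_cofinality_prod
    (G₁ G₂ : Type*) [Group G₁] [Group G₂]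
    (h₁ : HasUncountableStrongCofinality G₁)
    (h₂ : HasUncountableStrongCofinality G₂) :
    HasUncountableStrongCofinality (G₁ × G₂) := by
  intro A hA hcover
  obtain ⟨m₁, k₁, hk₁⟩ :=
    h₁.exists_range_subset_pow (MonoidHom.inl G₁ G₂) hA (hcover ▸ subset_univ _)
  obtain ⟨m₂, k₂, hk₂⟩ :=
    h₂.exists_range_subset_pow (MonoidHom.inr G₁ G₂) hA (hcover ▸ subset_univ _)
  have hstep {m k} (hm : m ≤ max m₁ m₂) : A m ^ k ⊆ A (max m₁ m₂) ^ k :=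
    pow_subset_pow_left (hA hm)
  refine ⟨max m₁ m₂, k₁ + k₂, eq_univ_of_forall fun p ↦ ?_⟩
  have hsplit : MonoidHom.inl G₁ G₂ p.1 * MonoidHom.inr G₁ G₂ p.2 = p := by simp
  rw [← hsplit, pow_add]
  exact mul_mem_mul (hstep (le_max_left _ _) (hk₁ (mem_range_self _)))
    (hstep (le_max_right _ _) (hk₂ (mem_range_self _)))
end

section
/- Let N₁, N₂ be sets with N₂ finite of cardinality n, let G₁ ≤ Sym(N₁) and G₂ ≤ Sym(N₂) be permutation groups, and let G = G₁ Wr G₂ be the (permutational) wreath product acting on N₁ × N₂. If G₁ has uncountable strong cofinality and G₂ is finite, then G has uncountable strong cofinality. -/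
open Pointwise

/-!
The wreath product is `T · B`, where `B ≅ G₁ ^ N₂` is the base group and `T` is the finite set
of lifts of `G₂`. Call a subset bounded if every increasing exhaustion `⋃ₘ Aₘ` of the group
has some `Aₘᵏ` containing it. Finite sets are bounded, homomorphic images of groups of
uncountable strong cofinality are bounded, and products of bounded sets are bounded; a finite
power of `G₁` is a product of the images of its coordinate embeddings, so it has uncountable
strong cofinality, and hence `T · B` is bounded.
-/

def IsExhaustionBounded {G : Type*} [Group G] (S : Set G) : Prop :=
  ∀ A : ℕ → Set G, Monotone A → (⋃ m, A m) = Set.univ → ∃ m k, S ⊆ A m ^ k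

theorem hasUncountableStrongCofinality_iff_isExhaustionBounded_univ {G : Type*} [Group G] :
    HasUncountableStrongCofinality G ↔ IsExhaustionBounded (Set.univ : Set G) := by
  refine forall₃_congr fun A _ _ => exists₂_congr fun m k => ?_
  exact Set.univ_subset_iff.symm

namespace IsExhaustionBounded

variable {G H : Type*} [Group G] [Group H] {S T : Set G}

theorem mono (hT : IsExhaustionBounded T) (hST : S ⊆ T) : IsExhaustionBounded S := fun A hA hcov =>
  let ⟨m, k, hk⟩ := hT A hA hcov
  ⟨m, k, hST.trans hk⟩

theorem mul (hS : IsExhaustionBounded S) (hT : IsExhaustionBounded T) :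
    IsExhaustionBounded (S * T) := by
  intro A hA hcov
  obtain ⟨m₁, k₁, hS⟩ := hS A hA hcov
  obtain ⟨m₂, k₂, hT⟩ := hT A hA hcov
  refine ⟨max m₁ m₂, k₁ + k₂, ?_⟩
  rw [pow_add]
  exact Set.mul_subset_mul (hS.trans (Set.pow_subset_pow_left (hA (le_max_left m₁ m₂))))
    (hT.trans (Set.pow_subset_pow_left (hA (le_max_right m₁ m₂))))

theorem of_finite (hS : S.Finite) : IsExhaustionBounded S := by
  intro A hA hcov
  obtain ⟨m, hm⟩ := hA.directed_le.exists_mem_subset_of_finset_subset_biUnion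
    (s := hS.toFinset) (by simp [hcov])
  exact ⟨m, 1, by simpa using hm⟩

theorem range_of_hasUncountableStrongCofinality (f : G →* H)
    (hG : HasUncountableStrongCofinality G) : IsExhaustionBounded (Set.range f) := by
  intro A hA hcov
  obtain ⟨m, k, hk⟩ := hG (fun m => f ⁻¹' A m) (fun _ _ h => Set.preimage_mono (hA h))
    (by simp [← Set.preimage_iUnion, hcov])
  refine ⟨m, k, ?_⟩
  calc Set.range f = f '' (f ⁻¹' A m) ^ k := by rw [hk, Set.image_univ]
    _ = (f '' (f ⁻¹' A m)) ^ k := Set.image_pow f _ k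
    _ ⊆ A m ^ k := Set.pow_subset_pow_left (Set.image_preimage_subset f _)

end IsExhaustionBounded

theorem HasUncountableStrongCofinality.pi {ι G : Type*} [Finite ι] [Group G]
    (hG : HasUncountableStrongCofinality G) : HasUncountableStrongCofinality (ι → G) := by
  classical
  have := Fintype.ofFinite ι
  suffices h : ∀ s : Finset ι, IsExhaustionBounded {f : ι → G | ∀ i ∉ s, f i = 1} by
    simpa [hasUncountableStrongCofinality_iff_isExhaustionBounded_univ] using h Finset.univ
  intro s
  induction s using Finset.induction_on with
  | empty =>
    refine (IsExhaustionBounded.of_finite (Set.finite_singleton (1 : ι → G))).mono fun f hf => ?_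
    exact funext fun i => hf i (Finset.notMem_empty i)
  | insert i s _ ih =>
    refine ((IsExhaustionBounded.range_of_hasUncountableStrongCofinality
      (MonoidHom.mulSingle (fun _ => G) i) hG).mul ih).mono fun f hf => ?_
    refine ⟨Pi.mulSingle i (f i), ⟨f i, rfl⟩, Function.update f i 1, fun j hj => ?_, ?_⟩
    · rcases eq_or_ne j i with rfl | hji
      · simp
      · simpa [hji] using hf j (by simp [hji, hj])
    · ext j
      rcases eq_or_ne j i with rfl | hji <;> simp [*]

def fiberwisePermHom (N₁ N₂ : Type*) : (N₂ → Equiv.Perm N₁) →* Equiv.Perm (N₁ × N₂) :=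
  MonoidHom.mk'
    (fun f =>
      { toFun p := (f p.2 p.1, p.2)
        invFun p := ((f p.2).symm p.1, p.2)
        left_inv p := by simp
        right_inv p := by simp })
    (fun _ _ => Equiv.ext fun _ => rfl)

/-- if `G₁ ≤ Sym(N₁)` has uncountable strong cofinality,
`G₂ ≤ Sym(N₂)` with `N₂` finite, then the permutational wreath product
`G = G₁ Wr G₂` acting on `N₁ × N₂` (the group of permutations
`(n₁, n₂) ↦ (f(n₂)(n₁), σ(n₂))` with `f : N₂ → G₁`, `σ ∈ G₂`) has uncountable
strong cofinality. -/
theorem wreath_product_uncountable_strong_cofinality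
    (N₁ N₂ : Type*) [Finite N₂]
    (G₁ : Subgroup (Equiv.Perm N₁)) (G₂ : Subgroup (Equiv.Perm N₂))
    (h₁ : HasUncountableStrongCofinality G₁)
    (W : Subgroup (Equiv.Perm (N₁ × N₂)))
    (hW : ∀ g : Equiv.Perm (N₁ × N₂), g ∈ W ↔
      ∃ (f : N₂ → G₁) (σ : G₂), ∀ p : N₁ × N₂,
        g p = ((f p.2 : Equiv.Perm N₁) p.1, (σ : Equiv.Perm N₂) p.2)) :
    HasUncountableStrongCofinality W := by
  let base : (N₂ → G₁) →* W :=
    ((fiberwisePermHom N₁ N₂).comp (G₁.subtype.compLeft N₂)).codRestrict W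
      fun f => (hW _).2 ⟨f, 1, fun _ => rfl⟩
  let top (σ : G₂) : W := ⟨Equiv.prodCongr (Equiv.refl N₁) σ, (hW _).2 ⟨1, σ, fun _ => rfl⟩⟩
  have hdecomp : (Set.univ : Set W) ⊆ Set.range top * Set.range base := by
    rintro w -
    obtain ⟨f, σ, hw⟩ := (hW w).1 w.2
    exact ⟨top σ, ⟨σ, rfl⟩, base f, ⟨f, rfl⟩, Subtype.ext <| Equiv.ext fun p => (hw p).symm⟩
  rw [hasUncountableStrongCofinality_iff_isExhaustionBounded_univ]
  exact ((IsExhaustionBounded.of_finite (Set.finite_range top)).mul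
    (.range_of_hasUncountableStrongCofinality base h₁.pi)).mono hdecomp
end

section
/- Let T be a non-rooted tree (connected acyclic graph), G = Aut(T), and X ⊆ T a finite nonempty set of vertices. If for every vertex t the algebraic closure acl({t}) is finite, then acl(X) is finite. -/
/-!
Let the hull of `X` be the finite subtree spanned by `X`. Every vertex `t` has a gate `m` in the
hull: a vertex separating `t` from all of `X`, so that the branch of the tree at `m` containing
`t` avoids `X`. Then `t ∈ acl X` implies `t ∈ acl {m}`. Indeed, an automorphism `g` fixing `m`
can be replaced by the automorphism that agrees with `g` on the branch of `t`, with `g⁻¹` on the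
branch of `g t` and with the identity elsewhere; it fixes `X` as soon as the branch of `g t`
avoids `X`. The
finitely many branches at `m` meeting `X` each contain only a translate of part of the orbit of
`t` under the stabiliser of `X`. Hence `acl X ⊆ ⋃ m ∈ hull X, acl {m}`.
-/

/-- The algebraic closure of `X` in a graph `Γ`: the set of vertices whose
orbit under the pointwise stabilizer of `X` in `Aut(Γ)` is finite. -/
def graphAcl {V : Type*} (Γ : SimpleGraph V) (X : Set V) : Set V :=
  {t | Set.Finite {u | ∃ g : Equiv.Perm V,
    (∀ a b : V, Γ.Adj (g a) (g b) ↔ Γ.Adj a b) ∧ (∀ x ∈ X, g x = x) ∧ g t = u}}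

namespace Equiv

variable {α : Type*}

open Classical in
noncomputable def piecewiseSwap (e : α ≃ α) (B B' : Set α) : α → α :=
  B.piecewise e (B'.piecewise e.symm id)

lemma piecewiseSwap_leftInverse {e : α ≃ α} {B B' : Set α} (he : ∀ v, e v ∈ B' ↔ v ∈ B)
    (hBB' : B = B' ∨ Disjoint B B') :
    Function.LeftInverse (e.symm.piecewiseSwap B' B) (e.piecewiseSwap B B') := by
  intro v
  by_cases hv : v ∈ B
  · simp [piecewiseSwap, hv, (he v).2 hv]
  by_cases hv' : v ∈ B'
  · have hev : e.symm v ∈ B := (he _).1 (by simpa using hv')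
    have hev' : e.symm v ∉ B' := by
      rcases hBB' with rfl | h
      · exact absurd hv' hv
      · exact Set.disjoint_left.1 h hev
    simp [piecewiseSwap, hv, hv', hev, hev']
  · simp [piecewiseSwap, hv, hv']

end Equiv

namespace SimpleGraph

variable {V W : Type*} {G : SimpleGraph V}

/-- The component of `G - m` containing `t` (empty when `t = m`). -/
def branch (G : SimpleGraph V) (m t : V) : Set V :=
  {u | ∃ p : G.Walk t u, m ∉ p.support}

section Branch

variable {m t u v : V}

lemma center_notMem_branch : m ∉ G.branch m t :=
  fun ⟨p, hp⟩ => hp p.end_mem_support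

lemma branch_self : G.branch m m = ∅ :=
  Set.eq_empty_of_forall_notMem fun _ ⟨p, hp⟩ => hp p.start_mem_support

lemma self_mem_branch (h : t ≠ m) : t ∈ G.branch m t :=
  ⟨.nil, by simpa using h.symm⟩

lemma mem_branch_comm (h : u ∈ G.branch m t) : t ∈ G.branch m u :=
  let ⟨p, hp⟩ := h
  ⟨p.reverse, by simpa using hp⟩

lemma mem_branch_trans (h₁ : u ∈ G.branch m t) (h₂ : v ∈ G.branch m u) : v ∈ G.branch m t :=
  let ⟨p, hp⟩ := h₁
  let ⟨q, hq⟩ := h₂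
  ⟨p.append q, by simp [Walk.mem_support_append_iff, hp, hq]⟩

lemma branch_eq_of_mem (h : u ∈ G.branch m t) : G.branch m u = G.branch m t :=
  Set.ext fun _ => ⟨mem_branch_trans h, mem_branch_trans (mem_branch_comm h)⟩

lemma branch_eq_or_disjoint (m t s : V) :
    G.branch m t = G.branch m s ∨ Disjoint (G.branch m t) (G.branch m s) := by
  refine or_iff_not_imp_right.2 fun h => ?_
  obtain ⟨v, hvt, hvs⟩ := Set.not_disjoint_iff.1 h
  rw [← branch_eq_of_mem hvt, branch_eq_of_mem hvs]

lemma mem_branch_of_adj (hu : u ∈ G.branch m t) (huv : G.Adj u v) (hv : v ≠ m) :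
    v ∈ G.branch m t :=
  mem_branch_trans hu ⟨huv.toWalk, by
    simpa [hv.symm] using fun h : m = u => center_notMem_branch (h ▸ hu)⟩

lemma Iso.apply_mem_branch_iff {G' : SimpleGraph W} (φ : G ≃g G') :
    φ u ∈ G'.branch (φ m) (φ t) ↔ u ∈ G.branch m t := by
  refine ⟨fun ⟨p, hp⟩ => ⟨(p.map φ.symm.toHom).copy (by simp) (by simp), ?_⟩,
    fun ⟨p, hp⟩ => ⟨p.map φ.toHom, ?_⟩⟩
  · simp only [Walk.support_copy, Walk.support_map, List.mem_map, not_exists, not_and]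
    rintro x hx rfl
    exact hp (by simpa using hx)
  · simpa [Walk.support_map] using hp

/-- Deleting an edge disconnects a forest. -/
lemma IsAcyclic.disjoint_branch_of_adj (hG : G.IsAcyclic) (h : G.Adj t u) :
    Disjoint (G.branch u t) (G.branch t u) := by
  refine Set.disjoint_left.2 fun z ⟨p, hp⟩ ⟨q, hq⟩ => ?_
  have := isBridge_iff_forall_walk_mem_edges.1 (isAcyclic_iff_forall_adj_isBridge.1 hG h)
    (p.append q.reverse)
  rw [Walk.edges_append, Walk.edges_reverse, List.mem_append, List.mem_reverse] at this
  rcases this with h | h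
  · exact hp (p.snd_mem_support_of_mem_edges h)
  · exact hq (q.fst_mem_support_of_mem_edges h)

end Branch

/-- In a tree, the subtree spanned by `X`. -/
def hull (G : SimpleGraph V) (X : Set V) : Set V :=
  {v | ∃ x ∈ X, ∃ y ∈ X, y ∉ G.branch v x}

section Hull

variable {X : Set V}

lemma subset_hull : X ⊆ G.hull X :=
  fun x hx => ⟨x, hx, x, hx, by simp [branch_self]⟩

lemma Connected.finite_hull (hG : G.Connected) (hX : X.Finite) : (G.hull X).Finite := by
  refine (hX.biUnion fun x _ => hX.biUnion fun y _ => (hG x y).some.support.finite_toSet).subset ?_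
  rintro v ⟨x, hx, y, hy, hv⟩
  simp only [Set.mem_iUnion]
  exact ⟨x, hx, y, hy, not_not.1 fun h => hv ⟨_, h⟩⟩

lemma IsAcyclic.exists_mem_hull_disjoint_branch (hG : G.IsAcyclic) {x₀ t : V} (hx₀ : x₀ ∈ X)
    (p : G.Walk t x₀) (hp : p.IsPath) : ∃ m ∈ G.hull X, Disjoint (G.branch m t) X := by
  classical
  induction p with
  | nil => exact ⟨_, subset_hull hx₀, by simp [branch_self]⟩
  | @cons t u x htu q ih =>
    rw [Walk.cons_isPath_iff] at hp
    obtain ⟨m, hm, hmX⟩ := ih hx₀ hp.1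
    by_cases ht : t ∈ G.hull X
    · exact ⟨t, ht, by simp [branch_self]⟩
    refine ⟨m, hm, Set.disjoint_right.2 fun z hz ⟨w, hw⟩ => ?_⟩
    have hzu : z ∈ G.branch t u := by
      rw [← branch_eq_of_mem (⟨q, hp.2⟩ : x ∈ G.branch t u)]
      by_contra hz'
      exact ht ⟨x, hx₀, z, hz, hz'⟩
    have hu : u ∈ w.support := by
      by_contra hu
      exact Set.disjoint_left.1 (hG.disjoint_branch_of_adj htu) ⟨w, hu⟩ hzu
    exact Set.disjoint_right.1 hmX hz
      ⟨w.dropUntil u hu, fun h => hw (w.support_dropUntil_subset_support hu h)⟩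

end Hull

section Swap

variable {m : V}

lemma Iso.adj_piecewiseSwap_branch (g : G ≃g G) (hm : g m = m) (t s : V) {a b : V}
    (hab : G.Adj a b) :
    G.Adj (g.toEquiv.piecewiseSwap (G.branch m t) (G.branch m s) a)
      (g.toEquiv.piecewiseSwap (G.branch m t) (G.branch m s) b) := by
  have hm' : g.symm m = m := by rw [RelIso.symm_apply_eq, hm]
  have hedge : ∀ {c}, ∀ {a b : V}, G.Adj a b → a ∈ G.branch m c → b ∉ G.branch m c → b = m :=
    fun hxy hx hy => by_contra fun h => hy (mem_branch_of_adj hx hxy h)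
  have hmB : ∀ {c}, m ∉ G.branch m c := center_notMem_branch
  have hsymm : ⇑g.toEquiv.symm = g.symm := rfl
  -- Every edge lies in `B ∪ {m}`, in `B' ∪ {m}` or outside `B ∪ B'`, where the swap agrees
  -- with `g`, with `g⁻¹` or with the identity respectively.
  simp only [Equiv.piecewiseSwap, Set.piecewise, RelIso.coe_fn_toEquiv, hsymm]
  have hba := hab.symm
  split_ifs <;> grind [RelIso.map_rel_iff]

lemma Iso.exists_eqOn_branch (g : G ≃g G) (hm : g m = m) (t : V) :
    ∃ f : G ≃g G, Set.EqOn f g (G.branch m t) ∧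
      ∀ v, v ∉ G.branch m t → v ∉ G.branch m (g t) → f v = v := by
  have hm' : g.symm m = m := by rw [RelIso.symm_apply_eq, hm]
  have hg : ∀ v, g.toEquiv v ∈ G.branch m (g t) ↔ v ∈ G.branch m t := fun v => by
    simpa [hm] using g.apply_mem_branch_iff (m := m) (t := t) (u := v)
  have hg' : ∀ v, g.toEquiv.symm v ∈ G.branch m t ↔ v ∈ G.branch m (g t) := fun v => by
    simpa using (hg (g.toEquiv.symm v)).symm
  have hdisj := branch_eq_or_disjoint (G := G) m t (g t)
  let e : V ≃ V :=
    ⟨g.toEquiv.piecewiseSwap _ _, g.toEquiv.symm.piecewiseSwap _ _,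
      Equiv.piecewiseSwap_leftInverse hg hdisj,
      Equiv.piecewiseSwap_leftInverse hg' (hdisj.imp Eq.symm fun h => h.symm)⟩
  refine ⟨⟨e, fun {a b} => ⟨fun h => ?_, g.adj_piecewiseSwap_branch hm t (g t)⟩⟩,
    fun v hv => by simp [e, Equiv.piecewiseSwap, hv],
    fun v hv hv' => by simp [e, Equiv.piecewiseSwap, hv, hv']⟩
  convert g.symm.adj_piecewiseSwap_branch hm' (g t) t h <;> exact (e.symm_apply_apply _).symm

end Swap

def fixingOrbit (G : SimpleGraph V) (X : Set V) (t : V) : Set V :=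
  {u | ∃ g : G ≃g G, (∀ x ∈ X, g x = x) ∧ g t = u}

lemma mem_graphAcl_iff {X : Set V} {t : V} : t ∈ graphAcl G X ↔ (G.fixingOrbit X t).Finite := by
  refine Iff.of_eq (congrArg Set.Finite (Set.ext fun u => ⟨?_, ?_⟩))
  · rintro ⟨g, hg, hX, rfl⟩
    exact ⟨⟨g, hg _ _⟩, hX, rfl⟩
  · rintro ⟨g, hX, rfl⟩
    exact ⟨g.toEquiv, fun _ _ => g.map_rel_iff, hX, rfl⟩

section Orbit

variable {X : Set V} {m t : V}

lemma mem_fixingOrbit_of_disjoint_branch (hgate : Disjoint (G.branch m t) X) {g : G ≃g G}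
    (hm : g m = m) (hgt : Disjoint (G.branch m (g t)) X) : g t ∈ G.fixingOrbit X t := by
  obtain ⟨f, hfg, hf⟩ := g.exists_eqOn_branch hm t
  refine ⟨f, fun x hx => hf x (hgate.notMem_of_mem_right hx) (hgt.notMem_of_mem_right hx), ?_⟩
  by_cases htm : t = m
  · subst htm
    rw [hm, hf t center_notMem_branch (hm.symm ▸ center_notMem_branch)]
  · exact hfg (self_mem_branch htm)

lemma finite_fixingOrbit_singleton_of_disjoint_branch (hX : X.Finite)
    (hgate : Disjoint (G.branch m t) X) (ht : (G.fixingOrbit X t).Finite) :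
    (G.fixingOrbit {m} t).Finite := by
  have cover : G.fixingOrbit {m} t ⊆
      G.fixingOrbit X t ∪ ⋃ z ∈ X, G.fixingOrbit {m} t ∩ G.branch m z := by
    rintro _ ⟨g, hg, rfl⟩
    by_cases hgt : Disjoint (G.branch m (g t)) X
    · exact Or.inl (mem_fixingOrbit_of_disjoint_branch hgate (hg m rfl) hgt)
    · obtain ⟨z, hzt, hz⟩ := Set.not_disjoint_iff.1 hgt
      exact Or.inr (Set.mem_biUnion hz ⟨⟨g, hg, rfl⟩, mem_branch_comm hzt⟩)
  refine (ht.union (hX.biUnion fun z _ => ?_)).subset cover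
  obtain h | ⟨_, ⟨g₀, hg₀, rfl⟩, hz₀⟩ :=
    (G.fixingOrbit {m} t ∩ G.branch m z).eq_empty_or_nonempty
  · simp [h]
  -- `g₀⁻¹` moves this part of the orbit into the branch of `t`, which avoids `X`.
  refine (ht.image g₀).subset ?_
  rintro _ ⟨⟨g, hg, rfl⟩, hz⟩
  have hm₀ : g₀.symm m = m := by rw [RelIso.symm_apply_eq, hg₀ m rfl]
  have hgt : g₀.symm (g t) ∈ G.branch m t := by
    rw [← branch_eq_of_mem hz₀] at hz
    simpa [hm₀] using g₀.symm.apply_mem_branch_iff.2 hz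
  refine ⟨g₀.symm (g t), ?_, by simp⟩
  refine mem_fixingOrbit_of_disjoint_branch (g := g.trans g₀.symm) hgate
    (by simp [hg m rfl, hm₀]) ?_
  rwa [RelIso.trans_apply, branch_eq_of_mem hgt]

end Orbit

end SimpleGraph

/-- in a tree (connected acyclic graph), if `acl({t})` is finite
for every vertex `t`, then `acl(X)` is finite for every finite nonempty set of
vertices `X`. -/
theorem tree_acl_finite_of_singletons
    (V : Type*) (Γ : SimpleGraph V) (hconn : Γ.Connected) (hacyc : Γ.IsAcyclic)
    (X : Set V) (hXfin : X.Finite) (hXne : X.Nonempty)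
    (h : ∀ t : V, (graphAcl Γ {t}).Finite) :
    (graphAcl Γ X).Finite := by
  obtain ⟨x₀, hx₀⟩ := hXne
  refine ((hconn.finite_hull hXfin).biUnion fun m _ => h m).subset fun t ht => ?_
  obtain ⟨p, hp⟩ := hconn.exists_isPath t x₀
  obtain ⟨m, hm, hgate⟩ := hacyc.exists_mem_hull_disjoint_branch hx₀ p hp
  exact Set.mem_biUnion hm <| SimpleGraph.mem_graphAcl_iff.2 <|
    SimpleGraph.finite_fixingOrbit_singleton_of_disjoint_branch hXfin hgate
      (SimpleGraph.mem_graphAcl_iff.1 ht)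
end

section
/- Let T be a countable rooted tree, G = Aut(T), f : A → B an isomorphism between finite substructures of T (preserving the predecessor function and the orbit-predicates P_t), and t ∈ T \ A an immediate successor of some a ∈ A. Then there exists t' ∈ T such that f ∪ {(t, t')} is again an isomorphism of finite substructures. Consequently, the structure (T, p, {P_t}) is ultrahomogeneous: every isomorphism between finite substructures extends to an automorphism of T. -/
/-!
Every isomorphism `f` between finite `p`-closed sets that maps each point into its
automorphism orbit extends to an automorphism; we induct on the domain. Remove a point `a` of
maximal depth and extend the rest to an automorphism `g`. Then `g a` and `f a` are siblings in
the same orbit, so some automorphism `σ` sends `g a` to `f a`. Acting by `σ` on the subtree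
below `g a`, by `σ⁻¹` on the subtree below `f a` and trivially elsewhere is again an
automorphism; composed with `g` it agrees with `f` at `a`, and it still agrees with `f` on the
rest of the domain, which meets neither subtree. The extension step is witnessed by `t' = g t`.
-/

open Function Set Equiv

lemma exists_perm_swap_image {T : Type*} (σ : Perm T) (S : Set T) (hS : ∀ x ∈ S, σ x ∉ S) :
    ∃ h : Perm T, (∀ x ∈ S, h x = σ x) ∧
      (∀ x ∉ S, σ.symm x ∈ S → h x = σ.symm x) ∧
      (∀ x ∉ S, σ.symm x ∉ S → h x = x) := by
  classical
  let F (x : T) : T := if x ∈ S then σ x else if σ.symm x ∈ S then σ.symm x else x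
  have hF : Involutive F := by
    intro x
    by_cases hx : x ∈ S
    · simp [F, hx, hS x hx]
    by_cases hx' : σ.symm x ∈ S <;> simp [F, hx, hx']
  exact ⟨hF.toPerm F, fun x hx => if_pos hx, fun x hx hx' => by simp [F, hx, hx'],
    fun x hx hx' => by simp [F, hx, hx']⟩

lemma Set.bijOn_update_of_eqOn {α β : Type*} [DecidableEq α] {f g : α → β} {A : Set α}
    {B : Set β} {t : α} (hg : Injective g) (hgf : EqOn g f A) (hB : g '' A = B) (ht : t ∉ A) :
    BijOn (update f t (g t)) (A ∪ {t}) (B ∪ {g t}) := by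
  have hbij := hg.injOn.bijOn_image (s := A ∪ {t})
  rw [image_union, image_singleton, hB] at hbij
  refine hbij.congr ?_
  rintro x (hx | rfl)
  · rw [update_of_ne (ne_of_mem_of_not_mem hx ht), hgf hx]
  · rw [update_self]

namespace PredTree

variable {T : Type*} {p : T → T} {r : T}

def aut (p : T → T) : Subgroup (Perm T) where
  carrier := {g | Function.Commute g p}
  mul_mem' hg hh := Function.Commute.comp_left hg hh
  one_mem' := Function.Commute.id_left
  inv_mem' hg := hg.inverse_left (Equiv.left_inv _) (Equiv.right_inv _)

lemma mem_aut {g : Perm T} : g ∈ aut p ↔ Function.Commute g p := Iff.rfl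

def subtree (p : T → T) (s : T) : Set T := {x | ∃ n, p^[n] x = s}

lemma mem_subtree_self (s : T) : s ∈ subtree p s := ⟨0, rfl⟩

lemma mem_subtree_of_parent_mem {s x : T} (h : p x ∈ subtree p s) : x ∈ subtree p s :=
  let ⟨n, hn⟩ := h
  ⟨n + 1, hn⟩

lemma parent_mem_subtree {s x : T} (h : x ∈ subtree p s) (hx : x ≠ s) :
    p x ∈ subtree p s := by
  obtain ⟨_ | n, hn⟩ := h
  · exact absurd hn hx
  · exact ⟨n, hn⟩

lemma apply_iterate_of_mapsTo {A : Set T} {f : T → T} (hA : MapsTo p A A)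
    (hfp : ∀ x ∈ A, f (p x) = p (f x)) (n : ℕ) {x : T} (hx : x ∈ A) :
    f (p^[n] x) = p^[n] (f x) := by
  induction n generalizing x with
  | zero => rfl
  | succ n ih => rw [iterate_succ_apply, iterate_succ_apply, ih (hA hx), hfp x hx]

lemma mem_subtree_of_apply_mem_subtree {A : Set T} {f : T → T} (hA : MapsTo p A A)
    (hinj : InjOn f A) (hfp : ∀ x ∈ A, f (p x) = p (f x)) {x s : T} (hx : x ∈ A)
    (hs : s ∈ A) (h : f x ∈ subtree p (f s)) : x ∈ subtree p s := by
  obtain ⟨n, hn⟩ := h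
  exact ⟨n, hinj (hA.iterate n hx) hs (by rw [apply_iterate_of_mapsTo hA hfp n hx, hn])⟩

lemma apply_mem_subtree {g : Perm T} (hg : g ∈ aut p) {s x : T} (h : x ∈ subtree p s) :
    g x ∈ subtree p (g s) :=
  let ⟨n, hn⟩ := h
  ⟨n, by rw [← (mem_aut.1 hg).iterate_right n x, hn]⟩

lemma notMem_subtree_of_mapsTo {A : Set T} (hA : MapsTo p A A) {a x : T} (ha : a ∉ A)
    (hx : x ∈ A) : x ∉ subtree p a :=
  fun ⟨n, hn⟩ => ha (hn ▸ hA.iterate n hx)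

-- `0` when `x` never reaches `r`
noncomputable def depth (p : T → T) (r x : T) : ℕ := sInf {n | p^[n] x = r}

structure IsRooted (p : T → T) (r : T) : Prop where
  parent_root : p r = r
  exists_iterate_eq_root : ∀ x, ∃ n, p^[n] x = r

namespace IsRooted

lemma eq_root_of_isPeriodicPt (hT : IsRooted p r) {n : ℕ} {x : T}
    (hx : IsPeriodicPt p (n + 1) x) : x = r := by
  obtain ⟨m, hm⟩ := hT.exists_iterate_eq_root x
  calc x = p^[(n + 1) * m] x := (hx.mul_const m).eq.symm
    _ = p^[n * m] (p^[m] x) := by rw [← iterate_add_apply, add_one_mul]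
    _ = r := by rw [hm, iterate_fixed hT.parent_root]

lemma eq_root_of_isFixedPt (hT : IsRooted p r) {x : T} (hx : IsFixedPt p x) : x = r :=
  hT.eq_root_of_isPeriodicPt (n := 0) hx

lemma apply_root (hT : IsRooted p r) {g : Perm T} (hg : g ∈ aut p) : g r = r :=
  hT.eq_root_of_isFixedPt (by rw [IsFixedPt, ← mem_aut.1 hg r, hT.parent_root])

lemma parent_notMem_subtree (hT : IsRooted p r) {s : T} (hs : s ≠ r) : p s ∉ subtree p s :=
  fun ⟨n, hn⟩ => hs (hT.eq_root_of_isPeriodicPt (n := n) hn)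

lemma eq_root_of_iterate_eq_sibling (hT : IsRooted p r) {x s s' : T} (hp : p s = p s')
    {n k : ℕ} (hs : p^[n] x = s) (hs' : p^[n + k + 1] x = s') : s' = r := by
  refine hT.eq_root_of_isPeriodicPt (n := k) ?_
  calc p^[k + 1] s' = p^[k + 1] s := by rw [iterate_succ_apply, iterate_succ_apply, hp]
    _ = s' := by rw [← hs, ← iterate_add_apply, ← hs', Nat.add_right_comm, Nat.add_comm k]

lemma disjoint_subtree_of_parent_eq (hT : IsRooted p r) {s s' : T} (hs : s ≠ r) (hs' : s' ≠ r)
    (hne : s ≠ s') (hp : p s = p s') : Disjoint (subtree p s) (subtree p s') := by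
  rw [Set.disjoint_left]
  rintro x ⟨n, hn⟩ ⟨m, hm⟩
  rcases Nat.lt_trichotomy n m with h | rfl | h
  · obtain ⟨k, rfl⟩ := Nat.exists_eq_add_of_lt h
    exact hs' (hT.eq_root_of_iterate_eq_sibling hp hn hm)
  · exact hne (hn.symm.trans hm)
  · obtain ⟨k, rfl⟩ := Nat.exists_eq_add_of_lt h
    exact hs (hT.eq_root_of_iterate_eq_sibling hp.symm hm hn)

lemma depth_parent_lt (hT : IsRooted p r) {x : T} (hx : x ≠ r) :
    depth p r (p x) < depth p r x := by
  have hmem : p^[depth p r x] x = r := Nat.sInf_mem (hT.exists_iterate_eq_root x)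
  obtain ⟨d, hd⟩ : ∃ d, depth p r x = d + 1 :=
    Nat.exists_eq_succ_of_ne_zero fun h => hx (by rwa [h] at hmem)
  rw [hd] at hmem ⊢
  exact Nat.lt_succ_of_le (Nat.sInf_le hmem)

lemma mapsTo_of_mapsTo_insert (hT : IsRooted p r) {s : Set T} {a : T}
    (hcl : MapsTo p (insert a s) (insert a s)) (ha : a ∉ s)
    (hmax : ∀ x ∈ s, depth p r x ≤ depth p r a) : MapsTo p s s := by
  intro x hx
  refine (hcl (mem_insert_of_mem a hx)).resolve_left fun hxa => ?_
  have hxr : x ≠ r := by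
    rintro rfl
    exact ha (by rwa [← hxa, hT.parent_root])
  exact (hmax x hx).not_gt (hxa ▸ hT.depth_parent_lt hxr)

lemma exists_mem_aut_swapping_subtrees (hT : IsRooted p r) {σ : Perm T} (hσ : σ ∈ aut p)
    {s : T} (hs : p (σ s) = p s) :
    ∃ h ∈ aut p, h s = σ s ∧ ∀ x ∉ subtree p s, x ∉ subtree p (σ s) → h x = x := by
  by_cases hfix : σ s = s
  · exact ⟨1, one_mem _, hfix.symm, fun _ _ _ => rfl⟩
  have hsr : s ≠ r := by
    rintro rfl
    exact hfix (hT.apply_root hσ)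
  have hσsr : σ s ≠ r := fun h => hsr (σ.injective (h.trans (hT.apply_root hσ).symm))
  have hdisj := hT.disjoint_subtree_of_parent_eq hsr hσsr (Ne.symm hfix) hs.symm
  set S := subtree p s
  have hσS : ∀ x ∈ S, σ x ∉ S := fun x hx =>
    Set.disjoint_right.1 hdisj (apply_mem_subtree hσ hx)
  obtain ⟨h, h_mem, h_symm, h_out⟩ := exists_perm_swap_image σ S hσS
  have hσ' : Function.Commute σ.symm p := mem_aut.1 (inv_mem hσ)
  -- `p s` lies above both siblings, so outside both subtrees
  have hps : h (p s) = p s := by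
    refine h_out _ (hT.parent_notMem_subtree hsr) ?_
    rw [← hs, hσ', symm_apply_apply]
    exact hT.parent_notMem_subtree hsr
  refine ⟨h, fun x => ?_, h_mem s (mem_subtree_self s),
    fun x hx hx' => h_out x hx fun h' => hx' ?_⟩
  · by_cases hx : x ∈ S
    · by_cases hxs : x = s
      · rw [hxs, hps, h_mem s (mem_subtree_self s), hs]
      · rw [h_mem _ (parent_mem_subtree hx hxs), h_mem x hx, mem_aut.1 hσ]
    by_cases hx' : σ.symm x ∈ S
    · by_cases hxs : σ.symm x = s
      · rw [h_symm x hx hx', hxs, ← hps, ← hs, ← hxs, apply_symm_apply]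
      have hpx : σ.symm (p x) ∈ S := hσ' x ▸ parent_mem_subtree hx' hxs
      have hpx' : p x ∉ S := fun h' => hσS _ hpx (by rwa [apply_symm_apply])
      rw [h_symm _ hpx' hpx, h_symm x hx hx', hσ']
    · have hpx : p x ∉ S := fun h' => hx (mem_subtree_of_parent_mem h')
      have hpx' : σ.symm (p x) ∉ S := fun h' => hx' (mem_subtree_of_parent_mem (hσ' x ▸ h'))
      rw [h_out _ hpx hpx', h_out x hx hx']
  · simpa using apply_mem_subtree hσ h'

lemma exists_mem_aut_eqOn_insert (hT : IsRooted p r) {s : Set T} {a : T} {f : T → T}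
    (hcl : MapsTo p (insert a s) (insert a s)) (hs : MapsTo p s s) (ha : a ∉ s)
    (hinj : InjOn f (insert a s)) (hfp : ∀ x ∈ insert a s, f (p x) = p (f x))
    (horb : ∃ g ∈ aut p, g a = f a) {g : Perm T} (hg : g ∈ aut p) (hgf : EqOn g f s) :
    ∃ h ∈ aut p, EqOn h f (insert a s) := by
  obtain ⟨g₁, hg₁, hg₁a⟩ := horb
  have hsib : p (f a) = p (g a) := by
    rcases hcl (mem_insert a s) with hpa | hpa
    · obtain rfl := hT.eq_root_of_isFixedPt hpa
      rw [← hg₁a, hT.apply_root hg₁, hT.apply_root hg]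
    · rw [← hfp a (mem_insert a s), ← hgf hpa, mem_aut.1 hg]
  have hσa : (g₁ * g⁻¹) (g a) = f a := by simp [hg₁a]
  obtain ⟨k, hk, hka, hkfix⟩ :=
    hT.exists_mem_aut_swapping_subtrees (mul_mem hg₁ (inv_mem hg)) (s := g a) (by rw [hσa, hsib])
  refine ⟨k * g, mul_mem hk hg, ?_⟩
  rintro x (rfl | hx)
  · rw [Perm.mul_apply, hka, hσa]
  have hxa : x ∉ subtree p a := notMem_subtree_of_mapsTo hs ha hx
  rw [Perm.mul_apply, hkfix]
  · exact hgf hx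
  · exact fun h => hxa (mem_subtree_of_apply_mem_subtree (mapsTo_univ p univ) g.injective.injOn
      (fun y _ => mem_aut.1 hg y) trivial trivial h)
  · rw [hσa, hgf hx]
    exact fun h => hxa (mem_subtree_of_apply_mem_subtree hcl hinj hfp (mem_insert_of_mem a hx)
      (mem_insert a s) h)

theorem exists_mem_aut_eqOn (hT : IsRooted p r) {A : Set T} (hA : A.Finite) {f : T → T}
    (hcl : MapsTo p A A) (hinj : InjOn f A) (hfp : ∀ x ∈ A, f (p x) = p (f x))
    (horb : ∀ x ∈ A, ∃ g ∈ aut p, g x = f x) : ∃ g ∈ aut p, EqOn g f A := by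
  classical
  lift A to Finset T using hA
  induction A using Finset.induction_on_max_value (depth p r) with
  | empty => exact ⟨1, one_mem _, by simp⟩
  | insert a s ha hmax ih =>
    rw [Finset.coe_insert] at hcl hinj hfp horb ⊢
    have hs : MapsTo p s s := hT.mapsTo_of_mapsTo_insert hcl ha hmax
    obtain ⟨g, hg, hgf⟩ := ih hs (hinj.mono (subset_insert a s))
      (fun x hx => hfp x (mem_insert_of_mem a hx)) (fun x hx => horb x (mem_insert_of_mem a hx))
    exact hT.exists_mem_aut_eqOn_insert hcl hs ha hinj hfp (horb a (mem_insert a s)) hg hgf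

end IsRooted
end PredTree

theorem rooted_tree_ultrahomogeneous_general
    (T : Type*) [DecidableEq T] (p : T → T) (r : T)
    (hroot : p r = r) (hreach : ∀ t : T, ∃ n : ℕ, p^[n] t = r)
    (A B : Set T) (hAfin : A.Finite)
    (hAcl : ∀ a ∈ A, p a ∈ A)
    (f : T → T) (hbij : Set.BijOn f A B)
    (hfp : ∀ a ∈ A, f (p a) = p (f a))
    (hforb : ∀ a ∈ A, ∃ g : Equiv.Perm T, (∀ x, g (p x) = p (g x)) ∧ g a = f a)
    (t : T) (htA : t ∉ A) (a : T) (haA : a ∈ A) (hpt : p t = a) :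
    (∃ t' : T, t' ∉ B ∧ p t' = f a ∧
      (∃ g : Equiv.Perm T, (∀ x, g (p x) = p (g x)) ∧ g t = t') ∧
      Set.BijOn (Function.update f t t') (A ∪ {t}) (B ∪ {t'})) ∧
    (∃ g : Equiv.Perm T, (∀ x, g (p x) = p (g x)) ∧ ∀ x ∈ A, g x = f x) := by
  obtain ⟨g, hg, hgf⟩ :=
    PredTree.IsRooted.exists_mem_aut_eqOn ⟨hroot, hreach⟩ hAfin hAcl hbij.injOn hfp hforb
  have hB : g '' A = B := hgf.image_eq.trans hbij.image_eq
  refine ⟨⟨g t, ?_, ?_, ⟨g, hg, rfl⟩, bijOn_update_of_eqOn g.injective hgf hB htA⟩,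
    ⟨g, hg, hgf⟩⟩
  · rw [← hB, g.injective.mem_set_image]
    exact htA
  · rw [← hg t, hpt, hgf haA]

/-- extension step and ultrahomogeneity for countable rooted
trees. A rooted tree is given by a predecessor function `p` with root `r`.
Automorphisms are permutations commuting with `p`; an isomorphism of finite
substructures (sets closed under `p`) is a bijection preserving `p` and the
orbit-predicates (each point is mapped into its own `Aut(T)`-orbit). Given such
an `f : A → B` and an immediate successor `t ∉ A` of some `a ∈ A`, there is a
`t'` such that `f ∪ {(t, t')}` is again such an isomorphism; consequently every
isomorphism of finite substructures extends to an automorphism of `T`. -/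
theorem rooted_tree_ultrahomogeneous
    (T : Type*) [Countable T] [DecidableEq T] (p : T → T) (r : T)
    (hroot : p r = r) (hreach : ∀ t : T, ∃ n : ℕ, p^[n] t = r)
    (A B : Set T) (hAfin : A.Finite) (hBfin : B.Finite)
    (hAcl : ∀ a ∈ A, p a ∈ A) (hBcl : ∀ b ∈ B, p b ∈ B)
    (f : T → T) (hbij : Set.BijOn f A B)
    (hfp : ∀ a ∈ A, f (p a) = p (f a))
    (hforb : ∀ a ∈ A, ∃ g : Equiv.Perm T, (∀ x, g (p x) = p (g x)) ∧ g a = f a)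
    (t : T) (htA : t ∉ A) (a : T) (haA : a ∈ A) (hpt : p t = a) :
    (∃ t' : T, t' ∉ B ∧ p t' = f a ∧
      (∃ g : Equiv.Perm T, (∀ x, g (p x) = p (g x)) ∧ g t = t') ∧
      Set.BijOn (Function.update f t t') (A ∪ {t}) (B ∪ {t'})) ∧
    (∃ g : Equiv.Perm T, (∀ x, g (p x) = p (g x)) ∧ ∀ x ∈ A, g x = f x) :=
  rooted_tree_ultrahomogeneous_general T p r hroot hreach A B hAfin hAcl f hbij hfp hforb t htA a
    haA hpt
end

section
/- Let G be a group. If G has uncountable strong cofinality, then every action of G by isometries on a metric space has bounded orbits. -/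
open Pointwise

/-- if `G` has uncountable strong cofinality, then every action
of `G` by isometries on a metric space has bounded orbits. -/
theorem bounded_orbits_of_uncountable_strong_cofinality
    (G : Type*) [Group G] (h : HasUncountableStrongCofinality G)
    (X : Type*) [MetricSpace X] [MulAction G X]
    (hiso : ∀ (g : G) (x y : X), dist (g • x) (g • y) = dist x y) :
    ∀ x : X, Bornology.IsBounded (Set.range fun g : G => g • x) := by
  intro x
  set A : ℕ → Set G := fun m => {g : G | dist x (g • x) ≤ (m : ℝ)} with hA
  have hmono : Monotone A := by
    intro a b hab g hg
    simp only [hA, Set.mem_setOf_eq] at hg ⊢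
    exact le_trans hg (Nat.cast_le.mpr hab)
  have hunion : (⋃ m, A m) = Set.univ := by
    ext g
    simp only [Set.mem_iUnion, Set.mem_univ, iff_true]
    obtain ⟨m, hm⟩ := exists_nat_ge (dist x (g • x))
    exact ⟨m, hm⟩
  obtain ⟨m, k, hmk⟩ := h A hmono hunion
  -- A m ^ k ⊆ {g | dist x (g • x) ≤ m * k}
  have key : ∀ k : ℕ, ∀ g ∈ A m ^ k, dist x (g • x) ≤ (m : ℝ) * k := by
    intro k
    induction k with
    | zero =>
      intro g hg
      rw [pow_zero, Set.mem_one] at hg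
      simp [hg]
    | succ n ih =>
      intro g hg
      rw [pow_succ] at hg
      obtain ⟨a, ha, b, hb, rfl⟩ := hg
      have h1 : dist x (a • x) ≤ (m : ℝ) * n := ih a ha
      have h2 : dist (a • x) ((a * b) • x) = dist x (b • x) := by
        rw [mul_smul]; exact (hiso a x (b • x)).symm ▸ hiso a x (b • x)
      calc dist x ((a * b) • x) ≤ dist x (a • x) + dist (a • x) ((a * b) • x) :=
            dist_triangle _ _ _
        _ = dist x (a • x) + dist x (b • x) := by rw [h2]
        _ ≤ (m : ℝ) * n + m := add_le_add h1 hb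
        _ = (m : ℝ) * (n + 1) := by ring
        _ = (m : ℝ) * ((n : ℕ) + 1 : ℕ) := by push_cast; ring
  have hbdd : ∀ g : G, dist x (g • x) ≤ (m : ℝ) * k := by
    intro g
    exact key k g (hmk ▸ Set.mem_univ g)
  apply Metric.isBounded_range_iff.mpr
  refine ⟨2 * ((m : ℝ) * k), ?_⟩
  intro a b
  calc dist (a • x) (b • x) ≤ dist (a • x) x + dist x (b • x) := dist_triangle _ _ _
    _ ≤ (m : ℝ) * k + (m : ℝ) * k := by
        refine add_le_add ?_ (hbdd b)
        rw [dist_comm]; exact hbdd a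
    _ = 2 * ((m : ℝ) * k) := by ring
end
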